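/- arXiv:2302.12298 — 2 statements merged into one kernel-verified Lean document; each statement's English description precedes it below -/
import Mathlib

section
/- Let p > 1, let f be a non-negative measurable function on (0,∞), and define g(x) = x^{1/(p-1)} f(x^{p/(p-1)}) (equivalently f(x) = g(x^{1-1/p}) x^{-1/p}). Then the classical Hardy inequality ∫₀^∞ ((1/x)∫₀^x f(y) dy)^p dx ≤ (p/(p-1))^p ∫₀^∞ f(x)^p dx holds if and only if ∫₀^∞ ((1/x)∫₀^x g(y) dy)^p dx/x ≤ ∫₀^∞ g(x)^p dx/x holds. -/
open MeasureTheory Set Real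

/-!
With `q = p / (p - 1)` the Hölder conjugate of `p`, we have `g y = y ^ (q - 1) * f (y ^ q)`, and
the substitution `u = x ^ q` turns every integral in the Haar form into the corresponding Lebesgue
one: `∫₀^x g = q⁻¹ ∫₀^{x^q} f`, hence `∫ g^p dx/x = q⁻¹ ∫ f^p` and
`∫ (x⁻¹ ∫₀^x g)^p dx/x = q^{-p-1} ∫ (u⁻¹ ∫₀^u f)^p du`.
So the Haar inequality is the classical one multiplied by `q^{-p-1}`.
-/

section Substitution

variable {q : ℝ}

theorem integral_Ioi_rpow_sub_one_mul_comp_rpow (h : ℝ → ℝ) (hq : 0 < q) :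
    ∫ x in Ioi 0, x ^ (q - 1) * h (x ^ q) = q⁻¹ * ∫ u in Ioi 0, h u := by
  have h_subst := integral_comp_rpow_Ioi_of_pos hq (g := h)
  simp only [smul_eq_mul, mul_assoc, integral_const_mul] at h_subst
  rw [← h_subst, ← mul_assoc, inv_mul_cancel₀ hq.ne', one_mul]

theorem integral_Ioo_rpow_sub_one_mul_comp_rpow (h : ℝ → ℝ) (hq : 0 < q) {x : ℝ} (hx : 0 < x) :
    ∫ y in Ioo 0 x, y ^ (q - 1) * h (y ^ q) = q⁻¹ * ∫ u in Ioo 0 (x ^ q), h u := by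
  have restrict_Ioi (a : ℝ) (k : ℝ → ℝ) :
      ∫ y in Ioo 0 a, k y = ∫ y in Ioi 0, (Ioo 0 a).indicator k y := by
    rw [setIntegral_indicator measurableSet_Ioo, inter_eq_self_of_subset_right Ioo_subset_Ioi_self]
  rw [restrict_Ioi, restrict_Ioi, ← integral_Ioi_rpow_sub_one_mul_comp_rpow _ hq]
  refine setIntegral_congr_fun measurableSet_Ioi fun y (hy : 0 < y) ↦ ?_
  have hmem : y ^ q ∈ Ioo 0 (x ^ q) ↔ y ∈ Ioo 0 x := by
    simp only [mem_Ioo, rpow_pos_of_pos hy, hy, true_and]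
    exact rpow_lt_rpow_iff hy.le hx.le hq
  by_cases hyx : y ∈ Ioo 0 x
  · simp [indicator_of_mem hyx, indicator_of_mem (hmem.2 hyx)]
  · simp [indicator_of_notMem hyx, indicator_of_notMem (mt hmem.1 hyx)]

end Substitution

section HardyHaar

variable {p q : ℝ} {f g : ℝ → ℝ}

theorem integral_Ioi_rpow_div_eq_of_holderConjugate (hpq : q.HolderConjugate p)
    (hf0 : ∀ x ∈ Ioi (0 : ℝ), 0 ≤ f x) (hg : ∀ y ∈ Ioi (0 : ℝ), g y = y ^ (q - 1) * f (y ^ q)) :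
    ∫ x in Ioi 0, g x ^ p / x = q⁻¹ * ∫ u in Ioi 0, f u ^ p := by
  rw [← integral_Ioi_rpow_sub_one_mul_comp_rpow _ hpq.pos]
  refine setIntegral_congr_fun measurableSet_Ioi fun x (hx : 0 < x) ↦ ?_
  rw [hg x hx, mul_rpow (by positivity) (hf0 _ (rpow_pos_of_pos hx q)), ← rpow_mul hx.le,
    hpq.sub_one_mul_conj, mul_div_right_comm, ← rpow_sub_one hx.ne']

theorem integral_Ioi_average_rpow_div_eq_of_holderConjugate (hpq : q.HolderConjugate p)
    (hf0 : ∀ x ∈ Ioi (0 : ℝ), 0 ≤ f x) (hg : ∀ y ∈ Ioi (0 : ℝ), g y = y ^ (q - 1) * f (y ^ q)) :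
    ∫ x in Ioi 0, ((1 / x) * ∫ y in Ioo 0 x, g y) ^ p / x
      = (q ^ p)⁻¹ * (q⁻¹ * ∫ u in Ioi 0, ((1 / u) * ∫ y in Ioo 0 u, f y) ^ p) := by
  have hq := hpq.pos
  rw [← integral_Ioi_rpow_sub_one_mul_comp_rpow _ hq, ← integral_const_mul]
  refine setIntegral_congr_fun measurableSet_Ioi fun x (hx : 0 < x) ↦ ?_
  have hinner : ∫ y in Ioo 0 x, g y = q⁻¹ * ∫ u in Ioo 0 (x ^ q), f u := by
    rw [← integral_Ioo_rpow_sub_one_mul_comp_rpow _ hq hx]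
    exact setIntegral_congr_fun measurableSet_Ioo fun y hy ↦ hg y hy.1
  have hI : 0 ≤ ∫ u in Ioo 0 (x ^ q), f u :=
    setIntegral_nonneg measurableSet_Ioo fun u hu ↦ hf0 u hu.1
  have hxpow : x ^ (q - 1) * (x ^ q)⁻¹ ^ p = x⁻¹ ^ p / x := by
    rw [inv_rpow hx.le, inv_rpow (by positivity), ← rpow_mul hx.le, ← rpow_neg hx.le,
      ← rpow_neg (by positivity), ← rpow_add hx, ← rpow_sub_one hx.ne', hpq.mul_eq_add]
    ring_nf
  rw [hinner, one_div, one_div, mul_rpow (by positivity) (by positivity),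
    mul_rpow (by positivity) hI, mul_rpow (by positivity) hI, inv_rpow hq.le,
    ← mul_assoc (x ^ (q - 1)), hxpow]
  ring

end HardyHaar

theorem hardy_classical_iff_haar_general (p : ℝ) (hp : 1 < p) (f g : ℝ → ℝ)
    (hf0 : ∀ x ∈ Ioi (0:ℝ), 0 ≤ f x)
    (hgdef : ∀ x ∈ Ioi (0:ℝ), g x = x ^ (1/(p-1)) * f (x ^ (p/(p-1)))) :
    ((∫ x in Ioi (0:ℝ), ((1/x) * ∫ y in Ioo (0:ℝ) x, f y) ^ p)
        ≤ (p/(p-1)) ^ p * ∫ x in Ioi (0:ℝ), (f x) ^ p)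
      ↔ ((∫ x in Ioi (0:ℝ), ((1/x) * ∫ y in Ioo (0:ℝ) x, g y) ^ p / x)
        ≤ ∫ x in Ioi (0:ℝ), (g x) ^ p / x) := by
  set q := p / (p - 1)
  have hpq : q.HolderConjugate p := (HolderConjugate.conjExponent hp).symm
  have hg : ∀ y ∈ Ioi (0 : ℝ), g y = y ^ (q - 1) * f (y ^ q) := fun y hy ↦ by
    rw [hgdef y hy, show q - 1 = 1 / (p - 1) by
      rw [eq_div_iff hpq.symm.sub_one_ne_zero]; linarith [hpq.mul_eq_add]]
  rw [integral_Ioi_average_rpow_div_eq_of_holderConjugate hpq hf0 hg,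
    integral_Ioi_rpow_div_eq_of_holderConjugate hpq hf0 hg, inv_mul_le_iff₀ (by positivity),
    mul_left_comm, mul_le_mul_iff_right₀ (inv_pos.2 hpq.pos)]

/-- Equivalence of the classical Hardy inequality (with Lebesgue measure) and its
convexity form (with the Haar measure `dx/x`), via the substitution
`g x = x^(1/(p-1)) * f (x^(p/(p-1)))`, i.e. `f x = g (x^(1-1/p)) * x^(-1/p)`. -/
theorem hardy_classical_iff_haar (p : ℝ) (hp : 1 < p) (f g : ℝ → ℝ)
    (hf : Measurable f) (hf0 : ∀ x ∈ Ioi (0:ℝ), 0 ≤ f x)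
    (hgdef : ∀ x ∈ Ioi (0:ℝ), g x = x ^ (1/(p-1)) * f (x ^ (p/(p-1)))) :
    ((∫ x in Ioi (0:ℝ), ((1/x) * ∫ y in Ioo (0:ℝ) x, f y) ^ p)
        ≤ (p/(p-1)) ^ p * ∫ x in Ioi (0:ℝ), (f x) ^ p)
      ↔ ((∫ x in Ioi (0:ℝ), ((1/x) * ∫ y in Ioo (0:ℝ) x, g y) ^ p / x)
        ≤ ∫ x in Ioi (0:ℝ), (g x) ^ p / x) :=
  hardy_classical_iff_haar_general p hp f g hf0 hgdef
end

section
/- The constant 1 is sharp in the inequality ∫₀^ℓ ((1/x)∫₀^x g(y) dy)^p dx/x ≤ C ∫₀^ℓ g(x)^p (1 - x/ℓ) dx/x for p ≥ 1: for every constant 0 < C < 1 there exists a non-negative measurable function g on (0,ℓ) (namely g(x) = x^α for small α > 0) for which the inequality with constant C fails. -/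
/-!
For `g x = x ^ α` with `α > 0` both sides are explicit. Put `b = α p`. The average of `g` over
`(0, x)` is `x ^ α / (α + 1)`, so the left side is `ℓ ^ b / (b (α + 1) ^ p)`, while the right side
is the Beta integral `ℓ ^ b / (b (b + 1))`. Their ratio `(α p + 1) / (α + 1) ^ p` is continuous in
`α` and equals `1` at `α = 0`, so it exceeds any `C < 1` for small `α > 0`.
-/

open MeasureTheory Set Real Filter Topology

lemma integral_Ioo_rpow {r : ℝ} (hr : -1 < r) {t : ℝ} (ht : 0 ≤ t) :
    ∫ x in Ioo 0 t, x ^ r = t ^ (r + 1) / (r + 1) := by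
  rw [← integral_Ioc_eq_integral_Ioo, ← intervalIntegral.integral_of_le ht,
    integral_rpow (Or.inl hr), zero_rpow (by linarith), sub_zero]

lemma one_div_mul_integral_Ioo_rpow {α : ℝ} (hα : -1 < α) {x : ℝ} (hx : 0 < x) :
    1 / x * ∫ y in Ioo 0 x, y ^ α = x ^ α / (α + 1) := by
  rw [integral_Ioo_rpow hα hx.le, rpow_add hx, rpow_one]
  field_simp

lemma integral_Ioo_rpow_sub_one {b : ℝ} (hb : 0 < b) {ℓ : ℝ} (hℓ : 0 ≤ ℓ) :
    ∫ x in Ioo 0 ℓ, x ^ (b - 1) = ℓ ^ b / b := by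
  rw [integral_Ioo_rpow (by linarith) hℓ, sub_add_cancel]

lemma integral_Ioo_rpow_sub_one_mul_one_sub_div {b : ℝ} (hb : 0 < b) {ℓ : ℝ} (hℓ : 0 < ℓ) :
    ∫ x in Ioo 0 ℓ, x ^ (b - 1) * (1 - x / ℓ) = ℓ ^ b / (b * (b + 1)) := by
  have hsplit : ∀ x ∈ Ioo 0 ℓ, x ^ (b - 1) * (1 - x / ℓ) = x ^ (b - 1) - x ^ b / ℓ := by
    intro x hx
    have := hx.1.ne'
    rw [rpow_sub hx.1, rpow_one]
    field_simp
  have hint : ∀ r : ℝ, -1 < r → IntegrableOn (fun x : ℝ ↦ x ^ r) (Ioo 0 ℓ) :=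
    fun r hr ↦ (intervalIntegral.integrableOn_Ioo_rpow_iff hℓ).2 hr
  rw [setIntegral_congr_fun measurableSet_Ioo hsplit,
    integral_sub (hint _ (by linarith)) ((hint b (by linarith)).div_const ℓ), integral_div,
    integral_Ioo_rpow_sub_one hb hℓ.le, integral_Ioo_rpow (by linarith) hℓ.le,
    rpow_add hℓ, rpow_one]
  field_simp
  ring

lemma integral_rpow_average_rpow_div {α p ℓ : ℝ} (hα : 0 < α) (hp : 0 < p) (hℓ : 0 < ℓ) :
    ∫ x in Ioo 0 ℓ, (1 / x * ∫ y in Ioo 0 x, y ^ α) ^ p / x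
      = ℓ ^ (α * p) / (α * p * (α + 1) ^ p) := by
  have hpow : ∀ x ∈ Ioo 0 ℓ, (1 / x * ∫ y in Ioo 0 x, y ^ α) ^ p / x
      = x ^ (α * p - 1) / (α + 1) ^ p := by
    intro x hx
    rw [one_div_mul_integral_Ioo_rpow (by linarith) hx.1,
      div_rpow (rpow_nonneg hx.1.le _) (by linarith), ← rpow_mul hx.1.le,
      rpow_sub hx.1, rpow_one]
    field_simp
  rw [setIntegral_congr_fun measurableSet_Ioo hpow, integral_div,
    integral_Ioo_rpow_sub_one (mul_pos hα hp) hℓ.le, div_div]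

lemma integral_rpow_rpow_mul_one_sub_div {α p ℓ : ℝ} (hα : 0 < α) (hp : 0 < p) (hℓ : 0 < ℓ) :
    ∫ x in Ioo 0 ℓ, (x ^ α) ^ p * (1 - x / ℓ) / x = ℓ ^ (α * p) / (α * p * (α * p + 1)) := by
  have hpow : ∀ x ∈ Ioo 0 ℓ, (x ^ α) ^ p * (1 - x / ℓ) / x
      = x ^ (α * p - 1) * (1 - x / ℓ) := by
    intro x hx
    rw [← rpow_mul hx.1.le, rpow_sub hx.1, rpow_one]
    field_simp
  rw [setIntegral_congr_fun measurableSet_Ioo hpow,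
    integral_Ioo_rpow_sub_one_mul_one_sub_div (mul_pos hα hp) hℓ]

lemma exists_pos_lt_mul_add_one_div_add_one_rpow (p : ℝ) {C : ℝ} (hC : C < 1) :
    ∃ α > 0, C < (α * p + 1) / (α + 1) ^ p := by
  have hcont : ContinuousAt (fun α : ℝ ↦ (α * p + 1) / (α + 1) ^ p) 0 :=
    (by fun_prop : ContinuousAt (fun α : ℝ ↦ α * p + 1) 0).div
      ((continuousAt_id.add continuousAt_const).rpow_const (Or.inl (by norm_num)))
      (by norm_num)
  have hnear : ∀ᶠ α in 𝓝 0, C < (α * p + 1) / (α + 1) ^ p :=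
    continuousAt_const.eventually_lt hcont (by simpa using hC)
  obtain ⟨α, hCα, hα⟩ :=
    ((hnear.filter_mono nhdsWithin_le_nhds).and (self_mem_nhdsWithin (s := Ioi 0))).exists
  exact ⟨α, hα, hCα⟩

theorem hardy_haar_finite_interval_sharp_general (ℓ : ℝ) (hℓ : 0 < ℓ) (p : ℝ) (hp : 1 ≤ p)
    (C : ℝ) (hC1 : C < 1) :
    ∃ g : ℝ → ℝ, Measurable g ∧ (∀ x ∈ Ioo (0:ℝ) ℓ, 0 ≤ g x) ∧
      ¬ (∫ x in Ioo (0:ℝ) ℓ, ((1/x) * ∫ y in Ioo (0:ℝ) x, g y) ^ p / x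
          ≤ C * ∫ x in Ioo (0:ℝ) ℓ, (g x) ^ p * (1 - x / ℓ) / x) := by
  have hp0 : 0 < p := by linarith
  obtain ⟨α, hα, hCα⟩ := exists_pos_lt_mul_add_one_div_add_one_rpow p hC1
  refine ⟨fun x ↦ x ^ α, by fun_prop, fun x hx ↦ rpow_nonneg hx.1.le _, ?_⟩
  rw [not_le, integral_rpow_average_rpow_div hα hp0 hℓ,
    integral_rpow_rpow_mul_one_sub_div hα hp0 hℓ]
  have hb : 0 < α * p := mul_pos hα hp0
  calc C * (ℓ ^ (α * p) / (α * p * (α * p + 1)))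
      < (α * p + 1) / (α + 1) ^ p * (ℓ ^ (α * p) / (α * p * (α * p + 1))) :=
        mul_lt_mul_of_pos_right hCα (by positivity)
    _ = ℓ ^ (α * p) / (α * p * (α + 1) ^ p) := by field_simp

/-- Sharpness of the constant 1 in the finite-interval convexity form of Hardy's
inequality: for `p ≥ 1` and any `0 < C < 1` there is a non-negative measurable `g`
on `(0, ℓ)` for which the inequality with constant `C` fails. -/
theorem hardy_haar_finite_interval_sharp (ℓ : ℝ) (hℓ : 0 < ℓ) (p : ℝ) (hp : 1 ≤ p)
    (C : ℝ) (hC0 : 0 < C) (hC1 : C < 1) :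
    ∃ g : ℝ → ℝ, Measurable g ∧ (∀ x ∈ Ioo (0:ℝ) ℓ, 0 ≤ g x) ∧
      ¬ (∫ x in Ioo (0:ℝ) ℓ, ((1/x) * ∫ y in Ioo (0:ℝ) x, g y) ^ p / x
          ≤ C * ∫ x in Ioo (0:ℝ) ℓ, (g x) ^ p * (1 - x / ℓ) / x) :=
  hardy_haar_finite_interval_sharp_general ℓ hℓ p hp C hC1
end
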